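/- Let N_1, ..., N_d be commuting bounded normal operators on a complex Hilbert space H and let λ ∈ ℂ^d. If there do NOT exist bounded operators S_1, ..., S_d with Σ_j S_j (N_j - λ_j) = I, then 0 belongs to the spectrum of the self-adjoint operator T = Σ_j (N_j - λ_j)*(N_j - λ_j), and consequently there exists a sequence of unit vectors x_n with ⟨T x_n, x_n⟩ → 0. -/

import Mathlib

/-!
If `T = ∑ⱼ Mⱼ⋆ Mⱼ` were invertible, `Sⱼ = T⁻¹ Mⱼ⋆` would give `∑ⱼ Sⱼ Mⱼ = 1`; so `T` is not
invertible. An operator with `‖x‖² c ≤ ‖⟪T x, x⟫‖` for some `c > 0` is invertible (Lax–Milgram),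
so a non-invertible `T` admits unit vectors along which `⟪T x, x⟫` is arbitrarily small.
-/

open Filter
open scoped InnerProductSpace

theorem exists_sum_mul_eq_one_of_isUnit_sum_star_mul_self {R ι : Type*} [Semiring R] [Star R]
    [Fintype ι] (M : ι → R) (h : IsUnit (∑ j, star (M j) * M j)) :
    ∃ S : ι → R, ∑ j, S j * M j = 1 := by
  obtain ⟨u, hu⟩ := h
  exact ⟨fun j => ↑u⁻¹ * star (M j), by simp_rw [mul_assoc, ← Finset.mul_sum, ← hu, u.inv_mul]⟩

namespace ContinuousLinearMap

variable {𝕜 E : Type*} [RCLike 𝕜] [NormedAddCommGroup E] [InnerProductSpace 𝕜 E] [CompleteSpace E]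

theorem exists_norm_inner_map_self_lt_of_not_isUnit {T : E →L[𝕜] E} (hT : ¬IsUnit T) {ε : ℝ}
    (hε : 0 < ε) : ∃ x, ‖x‖ = 1 ∧ ‖⟪T x, x⟫_𝕜‖ < ε := by
  by_contra! h
  refine hT (isUnit_of_forall_le_norm_inner_map T (c := ⟨ε, hε.le⟩) hε fun x => ?_)
  rcases eq_or_ne x 0 with rfl | hx
  · simp
  have hnorm : 0 < ‖x‖ := norm_pos_iff.mpr hx
  have hscaled := h ((‖x‖⁻¹ : 𝕜) • x) (norm_smul_inv_norm hx)
  rwa [map_smul, inner_smul_left, inner_smul_right, norm_mul, norm_mul, RCLike.norm_conj,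
    norm_inv, RCLike.norm_ofReal, abs_of_pos hnorm, ← mul_assoc, ← mul_inv, ← sq,
    le_inv_mul_iff₀ (by positivity)] at hscaled

theorem exists_tendsto_inner_map_self_zero_of_not_isUnit {T : E →L[𝕜] E} (hT : ¬IsUnit T) :
    ∃ x : ℕ → E, (∀ n, ‖x n‖ = 1) ∧ Tendsto (fun n => ⟪T (x n), x n⟫_𝕜) atTop (nhds 0) := by
  choose x hx_norm hx_lt using fun n : ℕ =>
    exists_norm_inner_map_self_lt_of_not_isUnit hT (Nat.one_div_pos_of_nat (n := n))
  refine ⟨x, hx_norm, tendsto_zero_iff_norm_tendsto_zero.mpr ?_⟩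
  exact squeeze_zero (fun _ => norm_nonneg _) (fun n => (hx_lt n).le)
    tendsto_one_div_add_atTop_nhds_zero_nat

end ContinuousLinearMap

theorem zero_mem_spectrum_of_not_left_invertible_general
    {H : Type*} [NormedAddCommGroup H] [InnerProductSpace ℂ H] [CompleteSpace H]
    {d : ℕ} (N : Fin d → H →L[ℂ] H)
    (lam : Fin d → ℂ)
    (hno : ¬ ∃ S : Fin d → H →L[ℂ] H, ∑ j, S j * (N j - lam j • 1) = 1) :
    (0 : ℂ) ∈ spectrum ℂ (∑ j, star (N j - lam j • 1) * (N j - lam j • 1)) ∧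
      ∃ x : ℕ → H, (∀ n, ‖x n‖ = 1) ∧
        Tendsto
          (fun n =>
            ⟪(∑ j, star (N j - lam j • 1) * (N j - lam j • 1)) (x n), x n⟫_ℂ)
          atTop (nhds 0) := by
  have hT : ¬IsUnit (∑ j, star (N j - lam j • 1) * (N j - lam j • 1)) := fun h =>
    hno (exists_sum_mul_eq_one_of_isUnit_sum_star_mul_self _ h)
  exact ⟨spectrum.zero_mem ℂ hT,
    ContinuousLinearMap.exists_tendsto_inner_map_self_zero_of_not_isUnit hT⟩

/-- If no bounded operators `S j` satisfy `∑ j, S j * (N j - lam j • 1) = 1`,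
then `0` belongs to the spectrum of the self-adjoint operator
`T = ∑ j, (N j - lam j)⋆ (N j - lam j)`, and consequently there is a sequence of unit
vectors `x n` with `⟪T (x n), x n⟫ → 0`. -/
theorem zero_mem_spectrum_of_not_left_invertible
    {H : Type*} [NormedAddCommGroup H] [InnerProductSpace ℂ H] [CompleteSpace H]
    {d : ℕ} (N : Fin d → H →L[ℂ] H)
    (hcomm : ∀ i j, Commute (N i) (N j))
    (hnormal : ∀ j, IsStarNormal (N j))
    (lam : Fin d → ℂ)
    (hno : ¬ ∃ S : Fin d → H →L[ℂ] H, ∑ j, S j * (N j - lam j • 1) = 1) :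
    (0 : ℂ) ∈ spectrum ℂ (∑ j, star (N j - lam j • 1) * (N j - lam j • 1)) ∧
      ∃ x : ℕ → H, (∀ n, ‖x n‖ = 1) ∧
        Tendsto
          (fun n =>
            ⟪(∑ j, star (N j - lam j • 1) * (N j - lam j • 1)) (x n), x n⟫_ℂ)
          atTop (nhds 0) :=
  zero_mem_spectrum_of_not_left_invertible_general N lam hno
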